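/- arXiv:1301.3043 — 7 statements merged into one kernel-verified Lean document; each statement's English description precedes it below -/
import Mathlib

section
/- For any norm ‖·‖ on ℝ^d, no collection of d open unit balls B°(x^j) = {x : ‖x − x^j‖ < 1}, j = 1,…,d, covers the closed unit ball B = {x : ‖x‖ ≤ 1}. Consequently at least d+1 open unit balls are needed to cover B. -/
open Metric Submodule Module

/-- Key lemma: given a nonzero functional vanishing on differences, find a bad point. -/
theorem aux_main (d : ℕ) (X : Type*) [NormedAddCommGroup X] [NormedSpace ℝ X]
    [FiniteDimensional ℝ X] (hdim : Module.finrank ℝ X = d)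
    (x : Fin d → X) : ¬ (closedBall (0 : X) 1 ⊆ ⋃ j, ball (x j) 1) := by
  intro hcov
  rcases Nat.eq_zero_or_pos d with hd | hd
  · subst hd
    have := hcov (show (0:X) ∈ closedBall (0:X) 1 by simp)
    simpa using this
  -- d ≥ 1
  set g : Fin d → X := fun j => x j - x ⟨0, hd⟩ with hg
  set W : Submodule ℝ X := span ℝ (Set.range g) with hW
  have hWtop : W < ⊤ := by
    rcases lt_or_ge (finrank ℝ W) d with h | h
    · refine lt_top_iff_ne_top.2 fun hEq => ?_
      rw [hEq, finrank_top, hdim] at h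
      exact lt_irrefl _ h
    · exfalso
      have hcard : Fintype.card (Fin d) ≤ (Set.range g).finrank ℝ := by
        simpa [Set.finrank, ← hW, Fintype.card_fin] using h
      have hli : LinearIndependent ℝ g :=
        linearIndependent_iff_card_le_finrank_span.2 hcard
      have : g ⟨0, hd⟩ ≠ 0 := hli.ne_zero _
      simp [hg] at this
  obtain ⟨φ, hφne, hφ⟩ := W.exists_dual_map_eq_bot_of_lt_top hWtop inferInstance
  have hφW : ∀ w ∈ W, φ w = 0 := by
    intro w hw
    have : φ w ∈ W.map φ := Submodule.mem_map_of_mem hw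
    rwa [hφ, Submodule.mem_bot] at this
  -- all x j have the same φ-value
  have hsame : ∀ j, φ (x j) = φ (x ⟨0, hd⟩) := by
    intro j
    have : φ (x j - x ⟨0, hd⟩) = 0 :=
      hφW _ (subset_span (Set.mem_range_self j))
    rw [map_sub] at this; linarith
  -- replace φ by ±φ so that c ≥ 0
  obtain ⟨ψ, hψne, hψsame, hc⟩ :
      ∃ ψ : X →ₗ[ℝ] ℝ, ψ ≠ 0 ∧ (∀ j, ψ (x j) = ψ (x ⟨0, hd⟩)) ∧ 0 ≤ ψ (x ⟨0, hd⟩) := by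
    rcases le_or_gt 0 (φ (x ⟨0, hd⟩)) with h | h
    · exact ⟨φ, hφne, hsame, h⟩
    · refine ⟨-φ, neg_ne_zero.2 hφne, fun j => ?_, ?_⟩
      · simp [hsame j]
      · simp; linarith
  set c : ℝ := ψ (x ⟨0, hd⟩) with hcdef
  -- ψ is continuous (finite dimensions)
  let F : X →L[ℝ] ℝ := LinearMap.toContinuousLinearMap ψ
  have hFψ : ∀ z, F z = ψ z := fun z => rfl
  -- maximize F on the closed unit ball
  have hcomp : IsCompact (closedBall (0:X) 1) := isCompact_closedBall _ _
  obtain ⟨y0, hy0mem, hy0max⟩ :=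
    hcomp.exists_isMaxOn ⟨0, by simp⟩ (F.continuous.continuousOn)
  set M : ℝ := F y0 with hM
  have hbound : ∀ z : X, F z ≤ M * ‖z‖ := by
    intro z
    rcases eq_or_ne z 0 with rfl | hz
    · simpa [hM] using hy0max (show (0:X) ∈ closedBall (0:X) 1 by simp)
    · have hnz : (0:ℝ) < ‖z‖ := norm_pos_iff.2 hz
      have hmem : ‖z‖⁻¹ • z ∈ closedBall (0:X) 1 := by
        simp [norm_smul, abs_of_pos (inv_pos.2 hnz), inv_mul_cancel₀ hnz.ne']
      have := hy0max hmem
      simp only [Set.mem_setOf_eq, map_smul, smul_eq_mul] at this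
      calc F z = ‖z‖ * (‖z‖⁻¹ * F z) := by field_simp
        _ ≤ ‖z‖ * M := by
            apply mul_le_mul_of_nonneg_left _ hnz.le
            simpa using this
        _ = M * ‖z‖ := mul_comm _ _
  have hMpos : 0 < M := by
    -- ψ ≠ 0, so there is v with ψ v ≠ 0
    obtain ⟨v, hv⟩ : ∃ v, ψ v ≠ 0 := by
      by_contra h
      push_neg at h
      exact hψne (LinearMap.ext fun z => by simp [h z])
    have hv' : (0:ℝ) < |ψ v| := abs_pos.2 hv
    have h1 : F v ≤ M * ‖v‖ := hbound v
    have h2 : F (-v) ≤ M * ‖v‖ := by simpa [norm_neg] using hbound (-v)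
    have hvn : (0:ℝ) < ‖v‖ := norm_pos_iff.2 (by rintro rfl; simp at hv)
    have : |ψ v| ≤ M * ‖v‖ := by
      rcases abs_cases (ψ v) with ⟨he, _⟩ | ⟨he, _⟩
      · rw [he]; simpa [hFψ] using h1
      · rw [he]; simpa [hFψ, map_neg] using h2
    nlinarith
  -- the bad point
  set y : X := -y0 with hy
  have hymem : y ∈ closedBall (0:X) 1 := by
    simpa [hy, norm_neg] using mem_closedBall_zero_iff.1 hy0mem
  rcases Set.mem_iUnion.1 (hcov hymem) with ⟨j, hj⟩
  have hdist : ‖y - x j‖ < 1 := by simpa [mem_ball, dist_eq_norm] using hj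
  have hkey : F (x j - y) ≤ M * ‖y - x j‖ := by
    calc F (x j - y) ≤ M * ‖x j - y‖ := hbound _
      _ = M * ‖y - x j‖ := by rw [norm_sub_rev]
  have hFxj : F (x j) = c := by rw [hFψ, hψsame j]
  have hFy : F y = -M := by simp [hy, hM, map_neg]
  rw [map_sub, hFxj, hFy] at hkey
  -- c + M ≤ M * ‖y - x j‖ < M, but c ≥ 0 : contradiction
  have : M * ‖y - x j‖ < M * 1 := by
    exact mul_lt_mul_of_pos_left hdist hMpos
  nlinarith

theorem stmt2 (d : ℕ) (X : Type*) [NormedAddCommGroup X] [NormedSpace ℝ X]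
    [FiniteDimensional ℝ X] (hdim : Module.finrank ℝ X = d) :
    (∀ x : Fin d → X, ¬ (Metric.closedBall (0 : X) 1 ⊆ ⋃ j, Metric.ball (x j) 1)) ∧
    (∀ (n : ℕ) (x : Fin n → X),
      Metric.closedBall (0 : X) 1 ⊆ (⋃ j, Metric.ball (x j) 1) → d + 1 ≤ n) := by
  refine ⟨aux_main d X hdim, ?_⟩
  intro n x hcov
  by_contra h
  push_neg at h
  have hn : n ≤ d := by omega
  rcases Nat.eq_zero_or_pos n with rfl | h0
  · have := hcov (show (0:X) ∈ closedBall (0:X) 1 by simp)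
    simpa using this
  · apply aux_main d X hdim (fun j => x ⟨j % n, Nat.mod_lt _ h0⟩)
    intro y hy
    rcases Set.mem_iUnion.1 (hcov hy) with ⟨j, hj⟩
    refine Set.mem_iUnion.2 ⟨⟨j, lt_of_lt_of_le j.2 hn⟩, ?_⟩
    simpa [Nat.mod_eq_of_lt j.2] using hj
end

section
/- Let e^1,…,e^d be the standard basis of ℝ^d with the Euclidean norm, and set x^j = (1/(2d)) e^j for j = 1,…,d and x^{d+1} = −(1/(2d)) ∑_{j=1}^d e^j. Then the closed Euclidean unit ball B₂ is contained in the union of the open unit balls B°₂(x^j), j = 1,…,d+1. -/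
/-!
Write `c = 1/(2d)` and suppose `‖x‖ ≤ 1` while `x` lies outside all `d + 1` open balls.
Expanding `1 ≤ ‖x - c eʲ‖²` gives `xⱼ ≤ c/2`, and together with `|xⱼ| ≤ 1` this yields
`xⱼ² ≤ c - xⱼ`; summing, `‖x‖² ≤ 1/2 - ∑ xⱼ`. Expanding `1 ≤ ‖x + c ∑ eʲ‖²` gives
`1 ≤ ‖x‖² + 2c ∑ xⱼ + c/2`, and combining the two bounds leaves
`1 ≤ (1 - 2c)‖x‖² + 3c/2 ≤ 1 - c/2`, which is absurd.
-/

open RealInnerProductSpace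

lemma one_le_norm_sq_sub_two_inner_add_norm_sq {E : Type*} [NormedAddCommGroup E]
    [InnerProductSpace ℝ E] {x v : E} (h : 1 ≤ dist x v) :
    1 ≤ ‖x‖ ^ 2 - 2 * ⟪x, v⟫ + ‖v‖ ^ 2 := by
  rw [← norm_sub_sq_real, ← dist_eq_norm]
  exact one_le_pow₀ h

lemma sq_le_sub_of_abs_le_one_of_le_half {c t : ℝ} (hc₀ : 0 ≤ c) (hc₂ : c ≤ 2)
    (ht : |t| ≤ 1) (htc : t ≤ c / 2) : t ^ 2 ≤ c - t := by
  rcases abs_cases t with ⟨habs, ht₀⟩ | ⟨habs, ht₀⟩ <;> nlinarith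

namespace EuclideanSpace

variable {d : ℕ}

lemma inner_single_one (x : EuclideanSpace ℝ (Fin d)) (j : Fin d) :
    ⟪x, EuclideanSpace.single j 1⟫ = x j := by
  simp [EuclideanSpace.inner_single_right]

lemma inner_sum_single_one (x : EuclideanSpace ℝ (Fin d)) :
    ⟪x, ∑ j : Fin d, EuclideanSpace.single j 1⟫ = ∑ j, x j := by
  simp [inner_sum, EuclideanSpace.inner_single_right]

lemma norm_sum_single_one_sq : ‖∑ j : Fin d, EuclideanSpace.single j (1 : ℝ)‖ ^ 2 = d := by
  simp [EuclideanSpace.norm_sq_eq]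

lemma abs_apply_le_one {x : EuclideanSpace ℝ (Fin d)} (hx : ‖x‖ ≤ 1) (j : Fin d) :
    |x j| ≤ 1 := by
  have hj : |x j| ≤ ‖x‖ := by simpa using PiLp.norm_apply_le x j
  linarith

lemma norm_sq_le_mul_sub_sum {x : EuclideanSpace ℝ (Fin d)} {c : ℝ} (hc₀ : 0 ≤ c)
    (hc₂ : c ≤ 2) (hx : ‖x‖ ≤ 1) (hxc : ∀ j, x j ≤ c / 2) :
    ‖x‖ ^ 2 ≤ d * c - ∑ j, x j :=
  calc ‖x‖ ^ 2 = ∑ j, x j ^ 2 := by simp [EuclideanSpace.norm_sq_eq]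
    _ ≤ ∑ j, (c - x j) := Finset.sum_le_sum fun j _ =>
        sq_le_sub_of_abs_le_one_of_le_half hc₀ hc₂ (abs_apply_le_one hx j) (hxc j)
    _ = d * c - ∑ j, x j := by simp [Finset.sum_sub_distrib]

end EuclideanSpace

theorem stmt3 (d : ℕ) (hd : 1 ≤ d) :
    Metric.closedBall (0 : EuclideanSpace ℝ (Fin d)) 1 ⊆
      (⋃ j : Fin d, Metric.ball ((1 / (2 * (d : ℝ))) • EuclideanSpace.single j 1) 1) ∪
      Metric.ball (-((1 / (2 * (d : ℝ))) • ∑ j : Fin d, EuclideanSpace.single j 1)) 1 := by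
  intro x hx
  by_contra hout
  simp only [Set.mem_union, Set.mem_iUnion, Metric.mem_ball, not_or, not_exists, not_lt]
    at hout
  obtain ⟨hfar_single, hfar_sum⟩ := hout
  set c : ℝ := 1 / (2 * (d : ℝ)) with hc
  have hdc : d * c = 1 / 2 := by rw [hc]; field_simp
  have hc₀ : 0 < c := by rw [hc]; positivity
  have hc₁ : c ≤ 1 / 2 := by nlinarith [(Nat.one_le_cast (α := ℝ)).2 hd]
  have hx₁ : ‖x‖ ≤ 1 := by simpa using hx
  have hx₂ : ‖x‖ ^ 2 ≤ 1 := pow_le_one₀ (norm_nonneg x) hx₁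
  have hxc : ∀ j, x j ≤ c / 2 := fun j => by
    have h := one_le_norm_sq_sub_two_inner_add_norm_sq (hfar_single j)
    rw [inner_smul_right, EuclideanSpace.inner_single_one, norm_smul, PiLp.norm_single,
      norm_one, mul_one, Real.norm_of_nonneg hc₀.le] at h
    nlinarith
  have hsum := EuclideanSpace.norm_sq_le_mul_sub_sum hc₀.le (by linarith) hx₁ hxc
  have hS := one_le_norm_sq_sub_two_inner_add_norm_sq hfar_sum
  rw [inner_neg_right, norm_neg, inner_smul_right, EuclideanSpace.inner_sum_single_one,
    norm_smul, mul_pow, EuclideanSpace.norm_sum_single_one_sq, Real.norm_of_nonneg hc₀.le] at hS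
  nlinarith [mul_le_mul_of_nonneg_left hsum hc₀.le,
    mul_nonneg (by linarith : (0 : ℝ) ≤ 1 - 2 * c) (by linarith : (0 : ℝ) ≤ 1 - ‖x‖ ^ 2)]
end

section
/- Let a = 2/(5d+1), x^j = a e^j for j = 1,…,d, and x^{d+1} = −a ∑_{j=1}^d e^j in ℝ^d with the Euclidean norm. Then the closed unit ball B₂ is contained in the union of the open balls B°₂(x^j, r) of radius r, for any r > (1 − a²)^{1/2}. -/
/-!
If some coordinate of a point `x` of the unit ball is at least `a`, then `x` is within
`(1 - a²)^{1/2}` of `a e^j`, since `‖x - a e^j‖² = ‖x‖² - 2a x_j + a²`. Otherwise every coordinate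
lies in `[-1, a]`, where `t (t + 1) ≤ a (a + 1)`; writing
`(t + a)² = (1 - 2a) t² + 2a t (t + 1) + a²` and summing over the coordinates gives
`‖x + a ∑ e^j‖² ≤ 1 - 2a + d a² (2a + 3)`, which is at most `1 - a²` exactly when
`a (1 + 3d + 2ad) ≤ 2`; this holds for `a = 2 / (5d + 1)`.
-/

theorem sq_add_le_of_neg_one_le_of_le {a t : ℝ} (ha : 0 ≤ a) (ht : -1 ≤ t) (hta : t ≤ a) :
    (t + a) ^ 2 ≤ (1 - 2 * a) * t ^ 2 + a ^ 2 * (2 * a + 3) := by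
  have hquad : t * (t + 1) ≤ a * (a + 1) := by nlinarith
  nlinarith

namespace EuclideanSpace

variable {ι : Type*} [Fintype ι] [DecidableEq ι]

theorem norm_sub_smul_single_one_sq (x : EuclideanSpace ℝ ι) (a : ℝ) (j : ι) :
    ‖x - a • single j (1 : ℝ)‖ ^ 2 = ‖x‖ ^ 2 - 2 * a * x j + a ^ 2 := by
  rw [norm_sub_sq_real, real_inner_smul_right, inner_single_right, norm_smul,
    PiLp.norm_single]
  simp only [conj_trivial, one_mul, Real.norm_eq_abs, norm_one, mul_one, sq_abs]
  ring

theorem norm_add_smul_sum_single_one_sq (x : EuclideanSpace ℝ ι) (a : ℝ) :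
    ‖x + a • ∑ j, single j (1 : ℝ)‖ ^ 2 = ∑ i, (x i + a) ^ 2 := by
  rw [real_norm_sq_eq]
  refine Finset.sum_congr rfl fun i _ => ?_
  simp

theorem norm_add_smul_sum_single_one_sq_le {x : EuclideanSpace ℝ ι} {a : ℝ} (hx : ‖x‖ ≤ 1)
    (ha : 0 ≤ a) (ha2 : a ≤ 1 / 2) (hxa : ∀ j, x j ≤ a) :
    ‖x + a • ∑ j, single j (1 : ℝ)‖ ^ 2 ≤ 1 - 2 * a + Fintype.card ι * (a ^ 2 * (2 * a + 3)) := by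
  have hcoord : ∀ i, -1 ≤ x i := fun i =>
    neg_le_of_abs_le ((PiLp.norm_apply_le x i).trans hx)
  calc ‖x + a • ∑ j, single j (1 : ℝ)‖ ^ 2 = ∑ i, (x i + a) ^ 2 :=
        norm_add_smul_sum_single_one_sq x a
    _ ≤ ∑ i, ((1 - 2 * a) * x i ^ 2 + a ^ 2 * (2 * a + 3)) :=
        Finset.sum_le_sum fun i _ => sq_add_le_of_neg_one_le_of_le ha (hcoord i) (hxa i)
    _ = (1 - 2 * a) * ‖x‖ ^ 2 + Fintype.card ι * (a ^ 2 * (2 * a + 3)) := by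
        rw [Finset.sum_add_distrib, ← Finset.mul_sum, ← real_norm_sq_eq]
        simp
    _ ≤ 1 - 2 * a + Fintype.card ι * (a ^ 2 * (2 * a + 3)) := by
        have : ‖x‖ ^ 2 ≤ 1 := pow_le_one₀ (norm_nonneg x) hx
        nlinarith

end EuclideanSpace

theorem stmt4 (d : ℕ) (hd : 1 ≤ d) (a r : ℝ) (ha : a = 2 / (5 * d + 1))
    (hr : Real.sqrt (1 - a ^ 2) < r) :
    Metric.closedBall (0 : EuclideanSpace ℝ (Fin d)) 1 ⊆
      (⋃ j : Fin d, Metric.ball (a • EuclideanSpace.single j 1) r) ∪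
      Metric.ball (-(a • ∑ j : Fin d, EuclideanSpace.single j 1)) r := by
  have hd1 : (1 : ℝ) ≤ d := by exact_mod_cast hd
  have ha0 : 0 < a := by rw [ha]; positivity
  have haa : a * (5 * d + 1) = 2 := by rw [ha]; field_simp
  have ha3 : a ≤ 1 / 3 := by nlinarith
  have mem_ball {c y : EuclideanSpace ℝ (Fin d)} (h : ‖y - c‖ ^ 2 ≤ 1 - a ^ 2) :
      y ∈ Metric.ball c r := by
    rw [Metric.mem_ball, dist_eq_norm]
    exact lt_of_le_of_lt (Real.le_sqrt_of_sq_le h) hr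
  intro x hx
  have hx1 : ‖x‖ ≤ 1 := by simpa using hx
  by_cases h : ∃ j, a ≤ x j
  · obtain ⟨j, hj⟩ := h
    refine Or.inl (Set.mem_iUnion.2 ⟨j, mem_ball ?_⟩)
    rw [EuclideanSpace.norm_sub_smul_single_one_sq]
    nlinarith [pow_le_one₀ (n := 2) (norm_nonneg x) hx1]
  · push Not at h
    refine Or.inr (mem_ball ?_)
    rw [sub_neg_eq_add]
    refine (EuclideanSpace.norm_add_smul_sum_single_one_sq_le hx1 ha0.le (by linarith)
      fun j => (h j).le).trans ?_
    rw [Fintype.card_fin]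
    nlinarith
end

section
/- Let Φ = {φ^1,…,φ^{d+1}} ⊂ ℝ^d with ‖φ^j‖₂ = 1 and ⟨φ^i, φ^j⟩ = −1/d for i ≠ j. Then with a = 1/(8d), the closed Euclidean unit ball B₂ is contained in ∪_{j=1}^{d+1} B°₂(a φ^j): more precisely, for every x with 1/2 ≤ ‖x‖₂ ≤ 1 there exists k such that ‖x − a φ^k‖₂² ≤ 1 − 1/(64 d²). -/
open RealInnerProductSpace Finset

/-! The vertices `φ j` of a regular simplex sum to zero, and since they span the space they form a
tight frame: `∑ j, ⟪x, φ j⟫ • φ j = (1 + 1 / d) • x`. The coefficients `c j = ⟪x, φ j⟫` thus sum to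
zero, are at least `-‖x‖`, and satisfy `∑ j, c j ^ 2 = (1 + 1 / d) ‖x‖ ^ 2`; comparing with
`∑ j, c j * (c j + ‖x‖) ≤ (d + 1) ‖x‖ max c` gives a vertex with `⟪x, φ k⟫ ≥ ‖x‖ / d`. Then
`‖x - a φ k‖ ^ 2 ≤ ‖x‖ ^ 2 - 2 a ‖x‖ / d + a ^ 2`, which for `a = 1 / (8 d)` and `1/2 ≤ ‖x‖ ≤ 1` is at
most `1 - 7 / (64 d ^ 2)`; points with `‖x‖ < 1/2` lie in every ball `B(a φ j, 1)`. -/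

structure IsRegularSimplex {E : Type*} [NormedAddCommGroup E] [InnerProductSpace ℝ E] {d : ℕ}
    (φ : Fin (d + 1) → E) : Prop where
  norm_eq_one : ∀ j, ‖φ j‖ = 1
  inner_eq : ∀ i j, i ≠ j → ⟪φ i, φ j⟫ = -1 / d

theorem exists_sum_sq_le_card_mul_mul {ι : Type*} [Fintype ι] [Nonempty ι] {c : ι → ℝ} {r : ℝ}
    (hsum : ∑ j, c j = 0) (hlow : ∀ j, -r ≤ c j) :
    ∃ k, ∑ j, c j ^ 2 ≤ Fintype.card ι * r * c k := by
  obtain ⟨k, hk⟩ := Finite.exists_max c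
  refine ⟨k, ?_⟩
  calc ∑ j, c j ^ 2 = ∑ j, c j * (c j + r) := by
        simp only [mul_add, sum_add_distrib, ← sum_mul, hsum, zero_mul, add_zero, sq]
    _ ≤ ∑ j, c k * (c j + r) :=
        sum_le_sum fun j _ => mul_le_mul_of_nonneg_right (hk j) (by linarith [hlow j])
    _ = Fintype.card ι * r * c k := by
        rw [← mul_sum, sum_add_distrib, hsum, sum_const, card_univ, nsmul_eq_mul]
        ring

namespace IsRegularSimplex

variable {E : Type*} [NormedAddCommGroup E] [InnerProductSpace ℝ E] {d : ℕ}
  {φ : Fin (d + 1) → E}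

theorem inner_eq_add_ite (hφ : IsRegularSimplex φ) (i j : Fin (d + 1)) :
    ⟪φ i, φ j⟫ = -1 / d + if i = j then 1 + 1 / (d : ℝ) else 0 := by
  by_cases h : i = j
  · rw [if_pos h, h, real_inner_self_eq_norm_sq, hφ.norm_eq_one]
    ring
  · rw [if_neg h, hφ.inner_eq i j h, add_zero]

theorem sum_inner_vertex_smul {M : Type*} [AddCommGroup M] [Module ℝ M] (hφ : IsRegularSimplex φ)
    (i : Fin (d + 1)) (v : Fin (d + 1) → M) :
    ∑ j, ⟪φ i, φ j⟫ • v j = (1 + 1 / d : ℝ) • v i - (1 / d : ℝ) • ∑ j, v j := by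
  simp only [hφ.inner_eq_add_ite, add_smul, sum_add_distrib, ite_smul, zero_smul,
    sum_ite_eq, mem_univ, if_true, ← smul_sum]
  rw [neg_div, neg_smul]
  abel

theorem sum_mul_inner (hφ : IsRegularSimplex φ) (i : Fin (d + 1)) (c : Fin (d + 1) → ℝ) :
    ∑ j, c j * ⟪φ i, φ j⟫ = (1 + 1 / d) * c i - 1 / d * ∑ j, c j := by
  simpa only [smul_eq_mul, mul_comm] using hφ.sum_inner_vertex_smul i c

theorem sum_eq_zero (hφ : IsRegularSimplex φ) (hd : 1 ≤ d) : ∑ j, φ j = 0 := by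
  have hd' : (d : ℝ) ≠ 0 := by positivity
  rw [← inner_self_eq_zero (𝕜 := ℝ), sum_inner]
  refine Finset.sum_eq_zero fun i _ => ?_
  have := hφ.sum_mul_inner i 1
  simp only [Pi.one_apply, one_mul, sum_const, card_univ, Fintype.card_fin, nsmul_eq_mul,
    mul_one] at this
  rw [inner_sum, this]
  field_simp
  push_cast
  ring

theorem coeff_eq_of_sum_smul_eq_zero (hφ : IsRegularSimplex φ) {c : Fin (d + 1) → ℝ}
    (hc : ∑ j, c j • φ j = 0) (j k : Fin (d + 1)) : c j = c k := by
  have key : ∀ i, (1 + 1 / d) * c i = 1 / d * ∑ j, c j := fun i => by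
    rw [← sub_eq_zero, ← hφ.sum_mul_inner, ← inner_zero_right (φ i), ← hc, inner_sum]
    simp only [real_inner_smul_right]
  have hpos : (0 : ℝ) < 1 + 1 / d := by positivity
  exact mul_left_cancel₀ hpos.ne' ((key j).trans (key k).symm)

theorem linearIndependent_succ (hφ : IsRegularSimplex φ) :
    LinearIndependent ℝ (fun i : Fin d => φ i.succ) := by
  rw [Fintype.linearIndependent_iff]
  intro g hg i
  have hc : ∑ j, (Fin.cons 0 g : Fin (d + 1) → ℝ) j • φ j = 0 := by
    simpa [Fin.sum_univ_succ] using hg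
  simpa using hφ.coeff_eq_of_sum_smul_eq_zero hc i.succ 0

theorem span_eq_top (hφ : IsRegularSimplex φ) (hd : 1 ≤ d) (hE : Module.finrank ℝ E = d) :
    Submodule.span ℝ (Set.range φ) = ⊤ := by
  have : Nonempty (Fin d) := ⟨⟨0, hd⟩⟩
  refine top_le_iff.mp ?_
  rw [← hφ.linearIndependent_succ.span_eq_top_of_card_eq_finrank (by simp [hE])]
  exact Submodule.span_mono (Set.range_comp_subset_range _ _)

theorem sum_inner_smul_eq_smul (hφ : IsRegularSimplex φ) (hd : 1 ≤ d)
    (hE : Module.finrank ℝ E = d) (x : E) :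
    ∑ j, ⟪x, φ j⟫ • φ j = (1 + 1 / d : ℝ) • x := by
  let frame : E →ₗ[ℝ] E := ∑ j, ((innerₛₗ ℝ).flip (φ j)).smulRight (φ j)
  suffices frame = (1 + 1 / d : ℝ) • LinearMap.id by simpa [frame] using congr($this x)
  refine LinearMap.ext_on_range (hφ.span_eq_top hd hE) fun i => ?_
  simp only [frame]
  simp [hφ.sum_inner_vertex_smul, hφ.sum_eq_zero hd]

theorem sum_inner_sq (hφ : IsRegularSimplex φ) (hd : 1 ≤ d) (hE : Module.finrank ℝ E = d)
    (x : E) : ∑ j, ⟪x, φ j⟫ ^ 2 = (1 + 1 / d) * ‖x‖ ^ 2 := by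
  have := congr(⟪x, $(hφ.sum_inner_smul_eq_smul hd hE x)⟫)
  simpa only [inner_sum, real_inner_smul_right, real_inner_self_eq_norm_sq, sq] using this

theorem exists_div_le_inner (hφ : IsRegularSimplex φ) (hd : 1 ≤ d)
    (hE : Module.finrank ℝ E = d) (x : E) : ∃ k, ‖x‖ / d ≤ ⟪x, φ k⟫ := by
  obtain ⟨k, hk⟩ := exists_sum_sq_le_card_mul_mul (c := fun j => ⟪x, φ j⟫) (r := ‖x‖)
    (by rw [← inner_sum, hφ.sum_eq_zero hd, inner_zero_right])
    (fun j => neg_le_of_abs_le <| (abs_real_inner_le_norm _ _).trans_eq <| by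
      rw [hφ.norm_eq_one, mul_one])
  refine ⟨k, ?_⟩
  rcases (norm_nonneg x).eq_or_lt with hx | hx
  · simp [norm_eq_zero.mp hx.symm]
  have hd' : (0 : ℝ) < d := by positivity
  rw [hφ.sum_inner_sq hd hE, Fintype.card_fin] at hk
  rw [div_le_iff₀ hd']
  refine le_of_mul_le_mul_left ?_ (by positivity : (0 : ℝ) < (d + 1) * ‖x‖)
  calc ((d + 1) * ‖x‖) * ‖x‖ = d * ((1 + 1 / d) * ‖x‖ ^ 2) := by field_simp
    _ ≤ d * (↑(d + 1) * ‖x‖ * ⟪x, φ k⟫) := by gcongr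
    _ = ((d + 1) * ‖x‖) * (⟪x, φ k⟫ * d) := by push_cast; ring

theorem exists_norm_sub_smul_sq_le (hφ : IsRegularSimplex φ) (hd : 1 ≤ d)
    (hE : Module.finrank ℝ E = d) (x : E) {a : ℝ} (ha : 0 ≤ a) :
    ∃ k, ‖x - a • φ k‖ ^ 2 ≤ ‖x‖ ^ 2 - 2 * a * ‖x‖ / d + a ^ 2 := by
  obtain ⟨k, hk⟩ := hφ.exists_div_le_inner hd hE x
  refine ⟨k, ?_⟩
  rw [norm_sub_sq_real, real_inner_smul_right, norm_smul, hφ.norm_eq_one, Real.norm_of_nonneg ha,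
    mul_one]
  have := mul_le_mul_of_nonneg_left hk ha
  linarith [show 2 * a * ‖x‖ / d = 2 * (a * (‖x‖ / d)) by ring]

theorem exists_norm_sub_smul_sq_le_one_sub (hφ : IsRegularSimplex φ) (hd : 1 ≤ d)
    (hE : Module.finrank ℝ E = d) {x : E} (hx₁ : 1 / 2 ≤ ‖x‖) (hx₂ : ‖x‖ ≤ 1) :
    ∃ k, ‖x - (1 / (8 * d) : ℝ) • φ k‖ ^ 2 ≤ 1 - 1 / (64 * (d : ℝ) ^ 2) := by
  obtain ⟨k, hk⟩ := hφ.exists_norm_sub_smul_sq_le hd hE x (a := 1 / (8 * d)) (by positivity)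
  refine ⟨k, hk.trans ?_⟩
  set ε : ℝ := 1 / (64 * (d : ℝ) ^ 2) with hε
  have hd' : (d : ℝ) ≠ 0 := by positivity
  have h₁ : 2 * (1 / (8 * d)) * ‖x‖ / d = 16 * ε * ‖x‖ := by rw [hε]; field_simp; ring
  have h₂ : (1 / (8 * d : ℝ)) ^ 2 = ε := by rw [hε]; field_simp; ring
  have : 0 ≤ ε := by positivity
  rw [h₁, h₂]
  nlinarith

theorem closedBall_subset_iUnion_ball (hφ : IsRegularSimplex φ) (hd : 1 ≤ d)
    (hE : Module.finrank ℝ E = d) :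
    Metric.closedBall 0 1 ⊆ ⋃ j, Metric.ball ((1 / (8 * d) : ℝ) • φ j) 1 := by
  intro x hx
  rw [mem_closedBall_zero_iff] at hx
  rw [Set.mem_iUnion]
  rcases le_or_gt (1 / 2) ‖x‖ with hx' | hx'
  · obtain ⟨k, hk⟩ := hφ.exists_norm_sub_smul_sq_le_one_sub hd hE hx' hx
    refine ⟨k, mem_ball_iff_norm.mpr (pow_lt_one_iff_of_nonneg (norm_nonneg _) two_ne_zero |>.mp ?_)⟩
    have : 0 < 1 / (64 * (d : ℝ) ^ 2) := by positivity
    linarith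
  · refine ⟨0, mem_ball_iff_norm.mpr ?_⟩
    have hd₁ : (1 : ℝ) ≤ d := by exact_mod_cast hd
    have ha : 1 / (8 * d : ℝ) ≤ 1 / 8 := by gcongr; linarith
    calc ‖x - (1 / (8 * d) : ℝ) • φ 0‖ ≤ ‖x‖ + 1 / (8 * d) := by
          refine (norm_sub_le _ _).trans_eq ?_
          rw [norm_smul, hφ.norm_eq_one, mul_one, Real.norm_of_nonneg (by positivity)]
      _ < 1 := by linarith

end IsRegularSimplex

theorem stmt8 (d : ℕ) (hd : 1 ≤ d) (φ : Fin (d + 1) → EuclideanSpace ℝ (Fin d))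
    (hnorm : ∀ j, ‖φ j‖ = 1)
    (hinner : ∀ i j, i ≠ j → ⟪φ i, φ j⟫ = -1 / d)
    (a : ℝ) (ha : a = 1 / (8 * d)) :
    (∀ x : EuclideanSpace ℝ (Fin d), 1 / 2 ≤ ‖x‖ → ‖x‖ ≤ 1 →
      ∃ k, ‖x - a • φ k‖ ^ 2 ≤ 1 - 1 / (64 * (d : ℝ) ^ 2)) ∧
    Metric.closedBall (0 : EuclideanSpace ℝ (Fin d)) 1 ⊆
      ⋃ j, Metric.ball (a • φ j) 1 := by
  subst ha
  have hφ : IsRegularSimplex φ := ⟨hnorm, hinner⟩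
  have hE := finrank_euclideanSpace_fin (𝕜 := ℝ) (n := d)
  exact ⟨fun x hx₁ hx₂ => hφ.exists_norm_sub_smul_sq_le_one_sub hd hE hx₁ hx₂,
    hφ.closedBall_subset_iUnion_ball hd hE⟩
end

section
/- If H is an n × n Hadamard matrix (all entries ±1 and HᵀH = n·I), then n = 1, n = 2, or n is divisible by 4. -/
theorem stmt9 (n : ℕ) (H : Matrix (Fin n) (Fin n) ℝ)
    (hentries : ∀ i j, H i j = 1 ∨ H i j = -1)
    (hH : H.transpose * H = (n : ℝ) • 1) :
    n = 1 ∨ n = 2 ∨ 4 ∣ n := by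
  rcases Nat.lt_or_ge n 3 with h3 | h3
  · interval_cases n
    · exact Or.inr (Or.inr (dvd_zero 4))
    · exact Or.inl rfl
    · exact Or.inr (Or.inl rfl)
  · right; right
    have horth : ∀ j k : Fin n, ∑ i, H i j * H i k = if j = k then (n : ℝ) else 0 := by
      intro j k
      have h := congrFun (congrFun hH j) k
      simpa [Matrix.mul_apply, Matrix.transpose_apply, Matrix.one_apply, Matrix.smul_apply,
        mul_comm, mul_ite, mul_one, mul_zero] using h
    set a : Fin n := ⟨0, by omega⟩
    set b : Fin n := ⟨1, by omega⟩
    set c : Fin n := ⟨2, by omega⟩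
    have hab : a ≠ b := by simp [a, b, Fin.ext_iff]
    have hac : a ≠ c := by simp [a, c, Fin.ext_iff]
    have hbc : b ≠ c := by simp [b, c, Fin.ext_iff]
    have key : (n : ℝ) = ∑ i, (H i a + H i b) * (H i a + H i c) := by
      have : ∑ i, (H i a + H i b) * (H i a + H i c) =
          (∑ i, H i a * H i a) + (∑ i, H i a * H i c) +
          ((∑ i, H i b * H i a) + (∑ i, H i b * H i c)) := by
        rw [← Finset.sum_add_distrib, ← Finset.sum_add_distrib, ← Finset.sum_add_distrib]
        apply Finset.sum_congr rfl
        intro i _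
        ring
      rw [this, horth, horth, horth, horth]
      simp [hab, hac, hbc, hab.symm]
    have hterm : ∀ i : Fin n, (H i a + H i b) * (H i a + H i c) = 0 ∨
        (H i a + H i b) * (H i a + H i c) = 4 := by
      intro i
      rcases hentries i a with h1 | h1 <;> rcases hentries i b with h2 | h2 <;>
        rcases hentries i c with h3 | h3 <;> rw [h1, h2, h3] <;> norm_num
    set S := Finset.univ.filter (fun i : Fin n => (H i a + H i b) * (H i a + H i c) = 4) with hS
    have hsum : ∑ i, (H i a + H i b) * (H i a + H i c) = 4 * S.card := by
      have : ∑ i, (H i a + H i b) * (H i a + H i c) =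
          ∑ i, (if (H i a + H i b) * (H i a + H i c) = 4 then (4 : ℝ) else 0) := by
        apply Finset.sum_congr rfl
        intro i _
        rcases hterm i with h | h <;> rw [h] <;> norm_num
      rw [this, ← Finset.sum_filter, ← hS, Finset.sum_const]
      ring
    have : (n : ℝ) = 4 * S.card := by rw [key, hsum]
    have hn : n = 4 * S.card := by exact_mod_cast this
    exact ⟨S.card, hn⟩
end

section
/- Let X = ℝ^d with a norm ‖·‖, ρ its modulus of smoothness, x ∈ B_X with ‖x‖ ≥ 1/2, g a unit vector, and suppose F_x(g) > μ for a norming functional F_x of x. If a > 0 satisfies 4ρ(2a) ≤ aμ, then ‖x − a g‖ < 1 − (1/2) a μ. -/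
theorem stmt16 (d : ℕ) (X : Type*) [NormedAddCommGroup X] [NormedSpace ℝ X]
    [FiniteDimensional ℝ X] (hdim : Module.finrank ℝ X = d)
    (ρ : ℝ → ℝ)
    (hρ : ∀ u : ℝ, ρ u = sSup {t : ℝ | ∃ x y : X, ‖x‖ = 1 ∧ ‖y‖ = 1 ∧
      t = (‖x + u • y‖ + ‖x - u • y‖) / 2 - 1})
    (x g : X) (hx1 : ‖x‖ ≤ 1) (hx2 : 1 / 2 ≤ ‖x‖) (hg : ‖g‖ = 1)
    (F : X →L[ℝ] ℝ) (hF1 : ‖F‖ = 1) (hFx : F x = ‖x‖)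
    (μ a : ℝ) (hμ : μ < F g) (ha : 0 < a) (h4 : 4 * ρ (2 * a) ≤ a * μ) :
    ‖x - a • g‖ < 1 - (1 / 2) * a * μ := by
  have hxpos : (0:ℝ) < ‖x‖ := lt_of_lt_of_le (by norm_num) hx2
  obtain ⟨xh, hxh⟩ : ∃ xh : X, xh = ‖x‖⁻¹ • x := ⟨_, rfl⟩
  have hxhnorm : ‖xh‖ = 1 := by
    rw [hxh, norm_smul, norm_inv, norm_norm, inv_mul_cancel₀ hxpos.ne']
  -- the set is bounded above
  have hbdd : BddAbove {t : ℝ | ∃ p q : X, ‖p‖ = 1 ∧ ‖q‖ = 1 ∧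
      t = (‖p + (2*a) • q‖ + ‖p - (2*a) • q‖) / 2 - 1} := by
    refine ⟨|2*a|, ?_⟩
    rintro t ⟨p, q, hp, hq, rfl⟩
    have h1 : ‖p + (2*a) • q‖ ≤ 1 + |2*a| := by
      calc ‖p + (2*a) • q‖ ≤ ‖p‖ + ‖(2*a) • q‖ := norm_add_le _ _
        _ = 1 + |2*a| := by rw [hp, norm_smul, hq, mul_one, Real.norm_eq_abs]
    have h2 : ‖p - (2*a) • q‖ ≤ 1 + |2*a| := by
      calc ‖p - (2*a) • q‖ ≤ ‖p‖ + ‖(2*a) • q‖ := norm_sub_le _ _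
        _ = 1 + |2*a| := by rw [hp, norm_smul, hq, mul_one, Real.norm_eq_abs]
    show _ ≤ |2*a|
    linarith
  have hle : (‖xh + (2*a) • g‖ + ‖xh - (2*a) • g‖) / 2 - 1 ≤ ρ (2*a) := by
    rw [hρ (2*a)]
    exact le_csSup hbdd ⟨xh, g, hxhnorm, hg, rfl⟩
  -- ρ (2a) ≥ 0
  have hsum2 : (2:ℝ) ≤ ‖xh + (2*a) • g‖ + ‖xh - (2*a) • g‖ := by
    have heq : (xh + (2*a) • g) + (xh - (2*a) • g) = (2:ℝ) • xh := by module
    calc (2:ℝ) = ‖(2:ℝ) • xh‖ := by rw [norm_smul, hxhnorm]; norm_num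
      _ = ‖(xh + (2*a) • g) + (xh - (2*a) • g)‖ := by rw [heq]
      _ ≤ ‖xh + (2*a) • g‖ + ‖xh - (2*a) • g‖ := norm_add_le _ _
  have hρpos : 0 ≤ ρ (2*a) := by linarith
  have hμ0 : 0 ≤ μ := by nlinarith
  -- F bound
  have hFxh : F xh = 1 := by
    rw [hxh, map_smul, smul_eq_mul, hFx, inv_mul_cancel₀ hxpos.ne']
  have hFplus : 1 + 2*a * F g ≤ ‖xh + (2*a) • g‖ := by
    have hop := F.le_opNorm (xh + (2*a) • g)
    rw [hF1, one_mul] at hop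
    have h2 : F (xh + (2*a) • g) = 1 + 2*a * F g := by
      rw [map_add, map_smul, smul_eq_mul, hFxh]
    have h3 : F (xh + (2*a) • g) ≤ ‖F (xh + (2*a) • g)‖ := le_abs_self _
    linarith [h3.trans hop]
  -- convex decomposition
  have hxeq : ‖x‖ • xh = x := by rw [hxh, smul_inv_smul₀ hxpos.ne']
  have hdecomp : x - a • g = (‖x‖ - 1/2) • xh + (1/2 : ℝ) • (xh - (2*a) • g) := by
    nth_rewrite 1 [← hxeq]
    module
  have hnormbound : ‖x - a • g‖ ≤ (‖x‖ - 1/2) + (1/2) * ‖xh - (2*a) • g‖ := by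
    rw [hdecomp]
    calc ‖(‖x‖ - 1/2) • xh + (1/2 : ℝ) • (xh - (2*a) • g)‖
        ≤ ‖(‖x‖ - 1/2) • xh‖ + ‖(1/2 : ℝ) • (xh - (2*a) • g)‖ := norm_add_le _ _
      _ = (‖x‖ - 1/2) + (1/2) * ‖xh - (2*a) • g‖ := by
          rw [norm_smul, norm_smul, hxhnorm, mul_one, Real.norm_eq_abs, Real.norm_eq_abs,
            abs_of_nonneg (by linarith : (0:ℝ) ≤ ‖x‖ - 1/2)]
          norm_num
  -- combine
  have hFg : a * μ < a * F g := (mul_lt_mul_iff_right₀ ha).mpr hμ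
  nlinarith [hle, hFplus, hnormbound, hx1]
end

section
/- In Euclidean ℝ^d with d ≥ 1, set a = 1/(4√d). For every x with 1/2 ≤ ‖x‖₂ ≤ 1, there exists a coordinate k and a sign ε ∈ {−1, +1} such that ‖x − ε a e^k‖₂² ≤ 1 − 3/(16d). Hence the 2d balls of radius r with r² = 1 − 3/(16d) centered at ± a e^j cover {x : 1/2 ≤ ‖x‖₂ ≤ 1}. -/
/-!
For `d ≥ 1` every `x ∈ ℝ^d` has a coordinate with `‖x‖ ≤ √d |x_k|` (take the largest one),
so `‖x‖ ≥ 1/2` gives `|x_k| ≥ 1/(2√d)`. Moving `x` towards `sign(x_k) · a · e_k` with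
`a = 1/(4√d)` changes the squared norm by `a² - 2a|x_k| ≤ 1/(16d) - 1/(4d) = -3/(16d)`.
-/

open Fintype

namespace EuclideanSpace

variable {ι : Type*} [Fintype ι]

theorem exists_norm_le_sqrt_card_mul_abs [Nonempty ι] (x : EuclideanSpace ℝ ι) :
    ∃ k, ‖x‖ ≤ √(card ι) * |x k| := by
  obtain ⟨k, -, hk⟩ := Finset.univ.exists_max_image (fun i ↦ |x i|) Finset.univ_nonempty
  refine ⟨k, (pow_le_pow_iff_left₀ (norm_nonneg x) (by positivity) two_ne_zero).mp ?_⟩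
  calc ‖x‖ ^ 2 = ∑ i, |x i| ^ 2 := by simp only [sq_abs, real_norm_sq_eq]
    _ ≤ ∑ _i : ι, |x k| ^ 2 :=
      Finset.sum_le_sum fun i hi ↦ pow_le_pow_left₀ (abs_nonneg _) (hk i hi) 2
    _ = (√(card ι) * |x k|) ^ 2 := by simp [mul_pow]

variable [DecidableEq ι]

theorem norm_sub_smul_single_sq (x : EuclideanSpace ℝ ι) (k : ι) (c : ℝ) :
    ‖x - c • single k 1‖ ^ 2 = ‖x‖ ^ 2 - 2 * c * x k + c ^ 2 := by
  rw [norm_sub_sq_real, real_inner_smul_right, inner_single_right, norm_smul, PiLp.norm_single]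
  simp only [conj_trivial, one_mul, norm_one, mul_one, Real.norm_eq_abs, sq_abs]
  ring

theorem exists_sign_norm_sub_smul_single_sq (x : EuclideanSpace ℝ ι) (k : ι) (a : ℝ) :
    ∃ ε : ℝ, (ε = 1 ∨ ε = -1) ∧
      ‖x - (ε * a) • single k 1‖ ^ 2 = ‖x‖ ^ 2 - 2 * a * |x k| + a ^ 2 := by
  rcases le_or_gt 0 (x k) with h | h
  · exact ⟨1, .inl rfl, by rw [norm_sub_smul_single_sq, abs_of_nonneg h]; ring⟩
  · exact ⟨-1, .inr rfl, by rw [norm_sub_smul_single_sq, abs_of_neg h]; ring⟩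

theorem exists_norm_sub_sign_smul_single_sq_le (x : EuclideanSpace ℝ ι)
    (hx₁ : 1 / 2 ≤ ‖x‖) (hx₂ : ‖x‖ ≤ 1) :
    ∃ (k : ι) (ε : ℝ), (ε = 1 ∨ ε = -1) ∧
      ‖x - (ε * (1 / (4 * √(card ι)))) • single k 1‖ ^ 2 ≤ 1 - 3 / (16 * card ι) := by
  have : Nonempty ι := by
    by_contra h
    rw [not_nonempty_iff] at h
    norm_num [Subsingleton.elim x 0] at hx₁
  obtain ⟨k, hk⟩ := exists_norm_le_sqrt_card_mul_abs x
  obtain ⟨ε, hε, hnorm⟩ := exists_sign_norm_sub_smul_single_sq x k (1 / (4 * √(card ι)))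
  refine ⟨k, ε, hε, hnorm.le.trans ?_⟩
  set n : ℝ := (card ι : ℝ)
  have hn : 0 < n := Nat.cast_pos.mpr card_pos
  have hsn : √n ^ 2 = n := Real.sq_sqrt hn.le
  have hxk : 1 / 2 ≤ √n * |x k| := hx₁.trans hk
  have hlin : 1 / (4 * n) ≤ 2 * (1 / (4 * √n)) * |x k| :=
    calc 1 / (4 * n) = 1 / 2 / (2 * n) := by field_simp; norm_num
      _ ≤ √n * |x k| / (2 * n) := by gcongr
      _ = 2 * (1 / (4 * √n)) * |x k| := by field_simp; linear_combination 4 * |x k| * hsn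
  have hsq : (1 / (4 * √n)) ^ 2 = 1 / (16 * n) := by
    rw [div_pow, mul_pow, hsn]; norm_num
  have hx₂' : ‖x‖ ^ 2 ≤ 1 := pow_le_one₀ (norm_nonneg x) hx₂
  have : 1 - 3 / (16 * n) = 1 - 1 / (4 * n) + 1 / (16 * n) := by field_simp; ring
  linarith

end EuclideanSpace

theorem stmt18_general (d : ℕ) (a r : ℝ)
    (ha : a = 1 / (4 * Real.sqrt d)) (hr : r = Real.sqrt (1 - 3 / (16 * d))) :
    (∀ x : EuclideanSpace ℝ (Fin d), 1 / 2 ≤ ‖x‖ → ‖x‖ ≤ 1 →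
      ∃ (k : Fin d) (ε : ℝ), (ε = 1 ∨ ε = -1) ∧
        ‖x - (ε * a) • EuclideanSpace.single k 1‖ ^ 2 ≤ 1 - 3 / (16 * d)) ∧
    {x : EuclideanSpace ℝ (Fin d) | 1 / 2 ≤ ‖x‖ ∧ ‖x‖ ≤ 1} ⊆
      (⋃ j, Metric.closedBall (a • EuclideanSpace.single j 1) r) ∪
      (⋃ j, Metric.closedBall (-(a • EuclideanSpace.single j 1)) r) := by
  subst ha
  have key := EuclideanSpace.exists_norm_sub_sign_smul_single_sq_le (ι := Fin d)
  simp only [Fintype.card_fin] at key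
  refine ⟨key, fun x ⟨hx₁, hx₂⟩ ↦ ?_⟩
  obtain ⟨k, ε, hε, hle⟩ := key x hx₁ hx₂
  have hdist : ‖x - (ε * (1 / (4 * √d))) • EuclideanSpace.single k 1‖ ≤ r := by
    simpa only [hr, abs_norm] using Real.abs_le_sqrt hle
  rcases hε with rfl | rfl
  · exact .inl (Set.mem_iUnion.mpr ⟨k, by simpa [dist_eq_norm] using hdist⟩)
  · exact .inr (Set.mem_iUnion.mpr ⟨k, by simpa [dist_eq_norm] using hdist⟩)

theorem stmt18 (d : ℕ) (hd : 1 ≤ d) (a r : ℝ)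
    (ha : a = 1 / (4 * Real.sqrt d)) (hr : r = Real.sqrt (1 - 3 / (16 * d))) :
    (∀ x : EuclideanSpace ℝ (Fin d), 1 / 2 ≤ ‖x‖ → ‖x‖ ≤ 1 →
      ∃ (k : Fin d) (ε : ℝ), (ε = 1 ∨ ε = -1) ∧
        ‖x - (ε * a) • EuclideanSpace.single k 1‖ ^ 2 ≤ 1 - 3 / (16 * d)) ∧
    {x : EuclideanSpace ℝ (Fin d) | 1 / 2 ≤ ‖x‖ ∧ ‖x‖ ≤ 1} ⊆
      (⋃ j, Metric.closedBall (a • EuclideanSpace.single j 1) r) ∪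
      (⋃ j, Metric.closedBall (-(a • EuclideanSpace.single j 1)) r) :=
  stmt18_general d a r ha hr
end
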